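/- If a polar algebra is Killing metrized, i.e., the Killing form κ(x,y) = tr(L(x)L(y)) is invariant (κ(x∘y, z) = κ(x, y∘z)), then dim A₁ = 2·dim A₀. -/
import Mathlib


/-- If a polar algebra is Killing metrized (the Killing form
`κ(x,y) = tr(L(x)L(y))` is invariant), then `dim A₁ = 2·dim A₀`. -/
theorem killing_metrized_polar_is_mutant
    {A : Type*} [AddCommGroup A] [Module ℝ A] [FiniteDimensional ℝ A]
    (mul : A →ₗ[ℝ] A →ₗ[ℝ] A)
    (hcomm : ∀ x y : A, mul x y = mul y x)
    (h : A →ₗ[ℝ] A →ₗ[ℝ] ℝ)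
    (hsymm : ∀ x y : A, h x y = h y x)
    (hpos : ∀ x : A, x ≠ 0 → 0 < h x x)
    (hinv : ∀ x y z : A, h (mul x y) z = h x (mul y z))
    (A₀ A₁ : Submodule ℝ A)
    (hA₀ : A₀ ≠ ⊥) (hA₁ : A₁ ≠ ⊥)
    (hsum : A₀ ⊔ A₁ = ⊤) (hind : A₀ ⊓ A₁ = ⊥)
    (horth : ∀ x ∈ A₀, ∀ y ∈ A₁, h x y = 0)
    (hmul00 : ∀ x ∈ A₀, ∀ y ∈ A₀, mul x y = 0)
    (hmul11 : ∀ x ∈ A₁, ∀ y ∈ A₁, mul x y ∈ A₀)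
    (hpolar : ∀ x ∈ A₀, ∀ y ∈ A₁, mul x (mul x y) = h x x • y)
    (htraceform : ∀ x₀ ∈ A₀, ∀ x₁ ∈ A₁, ∀ y₀ ∈ A₀, ∀ y₁ ∈ A₁,
      LinearMap.trace ℝ A (mul (x₀ + x₁) ∘ₗ mul (y₀ + y₁))
        = h x₀ y₀ * (Module.finrank ℝ A₁ : ℝ) + 2 * h x₁ y₁ * (Module.finrank ℝ A₀ : ℝ))
    (hkilling : ∀ x y z : A,
      LinearMap.trace ℝ A (mul (mul x y) ∘ₗ mul z)
        = LinearMap.trace ℝ A (mul x ∘ₗ mul (mul y z))) :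
    Module.finrank ℝ A₁ = 2 * Module.finrank ℝ A₀ := by
  obtain ⟨x, hx, hx0⟩ := Submodule.exists_mem_ne_zero_of_ne_bot hA₀
  obtain ⟨y, hy, hy0⟩ := Submodule.exists_mem_ne_zero_of_ne_bot hA₁
  set d0 : ℝ := (Module.finrank ℝ A₀ : ℝ) with hd0
  set d1 : ℝ := (Module.finrank ℝ A₁ : ℝ) with hd1
  set w := mul x y with hwdef
  -- w is orthogonal to A₀
  have hworth : ∀ a ∈ A₀, h w a = 0 := by
    intro a ha
    rw [hsymm]
    have := hinv a x y
    rw [hmul00 a ha x hx] at this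
    simpa using this.symm
  -- hence w ∈ A₁
  have hw1 : w ∈ A₁ := by
    have hcompl : IsCompl A₀ A₁ := ⟨disjoint_iff.mpr hind, codisjoint_iff.mpr hsum⟩
    obtain ⟨⟨w₀, hw₀⟩, ⟨w₁, hw₁⟩, hww, -⟩ := Submodule.existsUnique_add_of_isCompl hcompl w
    have hww' : w₀ + w₁ = w := hww
    have h0 : h w w₀ = 0 := hworth w₀ hw₀
    rw [← hww'] at h0
    have h10 : h w₁ w₀ = 0 := by rw [hsymm]; exact horth _ hw₀ _ hw₁
    simp only [map_add, LinearMap.add_apply, h10, add_zero] at h0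
    have hw00 : w₀ = 0 := by
      by_contra hne
      exact absurd h0 (ne_of_gt (hpos _ hne))
    rw [← hww', hw00, zero_add]
    exact hw₁
  -- h w w = h x x * h y y
  have hww : h w w = h x x * h y y := by
    have h1 : h (mul y x) w = h y (mul x w) := hinv y x w
    rw [hcomm y x] at h1
    rw [hwdef, h1, hwdef, hpolar x hx y hy]
    simp [mul_comm]
  have hwwpos : 0 < h w w := by
    rw [hww]; exact mul_pos (hpos x hx0) (hpos y hy0)
  set u := mul y w with hudef
  have hu : u ∈ A₀ := hmul11 y hy w hw1
  have hxu : h x u = h w w := (hinv x y w).symm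
  have hk := hkilling x y w
  have hL : LinearMap.trace ℝ A (mul (mul x y) ∘ₗ mul w) = 2 * h w w * d0 := by
    have ht := htraceform 0 A₀.zero_mem w hw1 0 A₀.zero_mem w hw1
    simp only [zero_add, map_zero, LinearMap.zero_apply, zero_mul] at ht
    exact ht
  have hR : LinearMap.trace ℝ A (mul x ∘ₗ mul (mul y w)) = h w w * d1 := by
    have ht := htraceform x hx 0 A₁.zero_mem u hu 0 A₁.zero_mem
    simp only [add_zero, map_zero, LinearMap.zero_apply, mul_zero, zero_mul] at ht
    rw [← hxu]
    exact ht
  rw [hL, hR] at hk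
  have hreal : d1 = 2 * d0 := by
    have hcancel : d1 * h w w = 2 * d0 * h w w := by
      rw [mul_comm d1 (h w w)] at *
      rw [← hk]; ring
    exact mul_right_cancel₀ (ne_of_gt hwwpos) hcancel
  have hcast : ((Module.finrank ℝ A₁ : ℕ) : ℝ) = ((2 * Module.finrank ℝ A₀ : ℕ) : ℝ) := by
    push_cast
    rw [hd1, hd0] at hreal
    exact_mod_cast hreal
  exact_mod_cast hcast
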